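/- Let X be a set, I a nonempty finite set, and (f_i)_{i∈I} a family of functions f_i : X → X having attractor A. Then for every infinite word α ∈ Λ(I), ⋂_{n∈ℕ} Y_{[α]_n} = {a_α}. -/

import Mathlib

open Filter Topology Set

/-- `φ : [0,∞) → [0,∞)` is a comparison function: it maps `[0,∞)` into `[0,∞)`,
is increasing, satisfies `φ t < t` for `t > 0`, and is right-continuous. -/
def IsComparisonFn (φ : ℝ → ℝ) : Prop :=
  (∀ t : ℝ, 0 ≤ t → 0 ≤ φ t) ∧
  MonotoneOn φ (Set.Ici (0 : ℝ)) ∧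
  (∀ t : ℝ, 0 < t → φ t < t) ∧
  (∀ t : ℝ, 0 ≤ t → ContinuousWithinAt φ (Set.Ici t) t)

/-- `f_{α₁…αₙ} = f_{α₁} ∘ f_{α₂} ∘ … ∘ f_{αₙ}` (the identity for the empty word). -/
def WordMap {X I : Type*} (f : I → X → X) : List I → X → X
  | [] => id
  | i :: w => f i ∘ WordMap f w

/-- `[α]_n`: the finite word consisting of the first `n` letters of the infinite word `α`. -/
def Pref {I : Type*} (α : ℕ → I) (n : ℕ) : List I := List.ofFn (fun k : Fin n => α (k : ℕ))

/-- `X_w = f_w(X)`, the image of the whole space under the word map. -/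
def WordSet {X I : Type*} (f : I → X → X) (w : List I) : Set X := Set.range (WordMap f w)

/-- A family `(f_i)_{i ∈ I}` of self-maps of `X` has attractor if:
(a) for every infinite word `α`, `⋂ₙ X_{[α]ₙ}` has a unique element `a_α`;
(b) whenever `a_α ≠ a_β`, some `X_{[α]_{n₀}}` and `X_{[β]_{n₀}}` are disjoint. -/
def HasAttractor {X I : Type*} (f : I → X → X) : Prop :=
  (∀ α : ℕ → I, ∃! a : X, ∀ n : ℕ, a ∈ WordSet f (Pref α n)) ∧
  (∀ α β : ℕ → I, ∀ a b : X,
    (∀ n : ℕ, a ∈ WordSet f (Pref α n)) → (∀ n : ℕ, b ∈ WordSet f (Pref β n)) →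
    a ≠ b →
    ∃ n₀ : ℕ, WordSet f (Pref α n₀) ∩ WordSet f (Pref β n₀) = ∅)

/-- Given a selection `a` of the points `a_β`,
`Y_w = {a_β : β ∈ Λ(I), X_w ∩ X_{[β]ₙ} ≠ ∅ for every n}`. -/
def YSet {X I : Type*} (f : I → X → X) (a : (ℕ → I) → X) (w : List I) : Set X :=
  {y | ∃ β : ℕ → I, y = a β ∧ ∀ n : ℕ, (WordSet f w ∩ WordSet f (Pref β n)).Nonempty}

/-- `X̃_w = X_w ∪ Y_w`. -/
def XtSet {X I : Type*} (f : I → X → X) (a : (ℕ → I) → X) (w : List I) : Set X :=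
  WordSet f w ∪ YSet f a w

/-! Suppose `y = a_{β_n} ∈ Y_{[α]_n}` for every `n`. The words `w` with `y ∈ X_w` and
`X_w ∩ X_{[α]_{|w|}} ≠ ∅` are closed under prefixes, and `[β_n]_n` is such a word of length `n`;
since `I` is finite, Kőnig's lemma (compactness of `Λ(I)`) yields an infinite word `γ` all of whose
prefixes are such words. Then `y = a_γ`, and `a_γ = a_α` because no `X_{[γ]_n}` misses `X_{[α]_n}`. -/

section Words

variable {I : Type*}

@[simp]
lemma length_pref (α : ℕ → I) (n : ℕ) : (Pref α n).length = n :=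
  List.length_ofFn

lemma pref_add (α : ℕ → I) (n k : ℕ) :
    Pref α (n + k) = Pref α n ++ Pref (fun i => α (n + i)) k := by
  simp only [Pref]
  rw [List.ofFn_add]
  rfl

theorem exists_forall_pref_of_forall_exists_pref [Finite I] {P : List I → Prop}
    (hP : ∀ w v, P (w ++ v) → P w) (h : ∀ n, ∃ β : ℕ → I, P (Pref β n)) :
    ∃ γ : ℕ → I, ∀ n, P (Pref γ n) := by
  let _ : TopologicalSpace I := ⊥
  have : DiscreteTopology I := ⟨rfl⟩
  have hclosed (n : ℕ) : IsClosed {γ : ℕ → I | P (Pref γ n)} := by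
    have hcont : Continuous fun (γ : ℕ → I) (k : Fin n) => γ k :=
      continuous_pi fun k => continuous_apply (k : ℕ)
    exact (isClosed_discrete {g : Fin n → I | P (List.ofFn g)}).preimage hcont
  have hanti (n : ℕ) : {γ : ℕ → I | P (Pref γ (n + 1))} ⊆ {γ | P (Pref γ n)} := fun γ hγ =>
    hP _ _ (by rwa [← pref_add])
  obtain ⟨γ, hγ⟩ := IsCompact.nonempty_iInter_of_sequence_nonempty_isCompact_isClosed _
    hanti h (hclosed 0).isCompact hclosed
  exact ⟨γ, Set.mem_iInter.mp hγ⟩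

end Words

section WordSets

variable {X I : Type*} (f : I → X → X)

lemma wordMap_append (w v : List I) : WordMap f (w ++ v) = WordMap f w ∘ WordMap f v := by
  induction w with
  | nil => rfl
  | cons i w ih => simp only [List.cons_append, WordMap, ih, Function.comp_assoc]

lemma wordSet_append_subset (w v : List I) : WordSet f (w ++ v) ⊆ WordSet f w := by
  rw [WordSet, wordMap_append]
  exact Set.range_comp_subset_range _ _

lemma antitone_wordSet_pref (α : ℕ → I) : Antitone fun n => WordSet f (Pref α n) := by
  intro n m hnm
  obtain ⟨k, rfl⟩ := Nat.exists_eq_add_of_le hnm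
  simpa only [pref_add] using wordSet_append_subset f (Pref α n) _

variable {f}

lemma HasAttractor.eq_of_forall_mem (hF : HasAttractor f) {γ : ℕ → I} {x y : X}
    (hx : ∀ n, x ∈ WordSet f (Pref γ n)) (hy : ∀ n, y ∈ WordSet f (Pref γ n)) : x = y :=
  (hF.1 γ).unique hx hy

lemma HasAttractor.eq_of_forall_inter_nonempty (hF : HasAttractor f) {α β : ℕ → I} {x y : X}
    (hx : ∀ n, x ∈ WordSet f (Pref α n)) (hy : ∀ n, y ∈ WordSet f (Pref β n))
    (hαβ : ∀ n, (WordSet f (Pref α n) ∩ WordSet f (Pref β n)).Nonempty) : x = y := by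
  by_contra hne
  obtain ⟨n, hn⟩ := hF.2 α β x y hx hy hne
  exact (hαβ n).ne_empty hn

end WordSets

theorem iInter_YSet_eq_singleton_general {X I : Type*} [Finite I]
    (f : I → X → X) (hF : HasAttractor f)
    (a : (ℕ → I) → X) (ha : ∀ (α : ℕ → I) (n : ℕ), a α ∈ WordSet f (Pref α n)) :
    ∀ α : ℕ → I, ⋂ n : ℕ, YSet f a (Pref α n) = {a α} := by
  intro α
  refine Set.eq_singleton_iff_unique_mem.mpr ⟨Set.mem_iInter.mpr fun n =>
    ⟨α, rfl, fun m => ⟨a α, ha α n, ha α m⟩⟩, fun y hy => ?_⟩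
  let P : List I → Prop := fun w =>
    y ∈ WordSet f w ∧ (WordSet f w ∩ WordSet f (Pref α w.length)).Nonempty
  have hP (w v : List I) (h : P (w ++ v)) : P w :=
    ⟨wordSet_append_subset f w v h.1, h.2.mono <| Set.inter_subset_inter
      (wordSet_append_subset f w v) (antitone_wordSet_pref f α (by simp))⟩
  have hβ (n : ℕ) : ∃ β, P (Pref β n) := by
    obtain ⟨β, rfl, hmeet⟩ := Set.mem_iInter.mp hy n
    exact ⟨β, ha β n, by simpa [Set.inter_comm] using hmeet n⟩
  obtain ⟨γ, hγ⟩ := exists_forall_pref_of_forall_exists_pref hP hβ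
  calc y = a γ := hF.eq_of_forall_mem (fun n => (hγ n).1) (ha γ)
    _ = a α := hF.eq_of_forall_inter_nonempty (ha γ) (ha α) (fun n => by simpa using (hγ n).2)

/-- **Proposition 3.6 e).** `⋂ₙ Y_{[α]ₙ} = {a_α}` for every infinite word `α`. -/
theorem iInter_YSet_eq_singleton {X I : Type*} [Finite I] [Nonempty I]
    (f : I → X → X) (hF : HasAttractor f)
    (a : (ℕ → I) → X) (ha : ∀ (α : ℕ → I) (n : ℕ), a α ∈ WordSet f (Pref α n)) :
    ∀ α : ℕ → I, ⋂ n : ℕ, YSet f a (Pref α n) = {a α} :=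
  iInter_YSet_eq_singleton_general f hF a ha
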